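/- arXiv:2204.02270 — 6 statements merged into one kernel-verified Lean document; each statement's English description precedes it below -/
import Mathlib

section
/- Let H be a complex Hilbert space and U : ℝ → (H →L[ℂ] H) a one-parameter unitary group. If ψ₀ ∈ H has norm 1 and satisfies ⟪ψ₀, U(t) ψ₀⟫ = 0 for all t < 0, then the family (U(t) ψ₀)_{t ∈ ℝ} is an orthonormal family of vectors in H indexed by ℝ. -/
open scoped InnerProductSpace

/-- If `ψ₀` is a unit vector orthogonal to all its past states under a
one-parameter unitary group `U`, then the history `(U t ψ₀)_{t ∈ ℝ}` is an orthonormal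
family indexed by `ℝ`. -/
theorem history_orthonormal
    {H : Type*} [NormedAddCommGroup H] [InnerProductSpace ℂ H] [CompleteSpace H]
    (U : ℝ → H →L[ℂ] H)
    (hU0 : U 0 = 1)
    (hUadd : ∀ s t : ℝ, U (s + t) = U s ∘L U t)
    (hUinner : ∀ (t : ℝ) (x y : H), ⟪U t x, U t y⟫_ℂ = ⟪x, y⟫_ℂ)
    (hUsurj : ∀ t : ℝ, Function.Surjective (U t))
    (ψ₀ : H) (hψ₀ : ‖ψ₀‖ = 1)
    (hpast : ∀ t : ℝ, t < 0 → ⟪ψ₀, U t ψ₀⟫_ℂ = 0) :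
    Orthonormal ℂ (fun t : ℝ => U t ψ₀) := by
  have key : ∀ s t : ℝ, ⟪U s ψ₀, U t ψ₀⟫_ℂ = ⟪ψ₀, U (t - s) ψ₀⟫_ℂ := by
    intro s t
    calc ⟪U s ψ₀, U t ψ₀⟫_ℂ = ⟪U s ψ₀, U (s + (t - s)) ψ₀⟫_ℂ := by ring_nf
      _ = ⟪U s ψ₀, U s (U (t - s) ψ₀)⟫_ℂ := by rw [hUadd]; rfl
      _ = ⟪ψ₀, U (t - s) ψ₀⟫_ℂ := hUinner s ψ₀ _
  have hnonneg : ∀ r : ℝ, 0 < r → ⟪ψ₀, U r ψ₀⟫_ℂ = 0 := by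
    intro r hr
    have h1 : ⟪U r ψ₀, U 0 ψ₀⟫_ℂ = ⟪ψ₀, U (0 - r) ψ₀⟫_ℂ := key r 0
    have h2 : ⟪ψ₀, U (0 - r) ψ₀⟫_ℂ = 0 := by
      apply hpast; simpa using neg_neg_iff_pos.mpr hr
    have h3 : ⟪U r ψ₀, ψ₀⟫_ℂ = 0 := by
      have := h1.trans h2
      simpa [hU0] using this
    rw [← inner_conj_symm, h3, map_zero]
  rw [orthonormal_iff_ite]
  intro s t
  rw [key]
  by_cases h : s = t
  · simp [h, hU0, inner_self_eq_norm_sq_to_K, hψ₀]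
  · simp only [h, if_false]
    rcases lt_or_gt_of_ne (sub_ne_zero.mpr (fun hh => h hh.symm)) with hlt | hgt
    · exact hpast _ hlt
    · exact hnonneg _ hgt
end

section
/- Let H be a complex Hilbert space and U : ℝ → (H →L[ℂ] H) a one-parameter unitary group. If there exists a nonzero vector ψ₀ ∈ H with ⟪ψ₀, U(t) ψ₀⟫ = 0 for all t < 0, then H is not a separable topological space. -/
open scoped InnerProductSpace

/-- If a one-parameter unitary group on a complex Hilbert space `H` admits a
nonzero state orthogonal to all its past states, then `H` is not separable. -/
theorem not_separable_of_irreversible_change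
    {H : Type*} [NormedAddCommGroup H] [InnerProductSpace ℂ H] [CompleteSpace H]
    (U : ℝ → H →L[ℂ] H)
    (hU0 : U 0 = 1)
    (hUadd : ∀ s t : ℝ, U (s + t) = U s ∘L U t)
    (hUinner : ∀ (t : ℝ) (x y : H), ⟪U t x, U t y⟫_ℂ = ⟪x, y⟫_ℂ)
    (hUsurj : ∀ t : ℝ, Function.Surjective (U t))
    (ψ₀ : H) (hψ₀ : ψ₀ ≠ 0)
    (hpast : ∀ t : ℝ, t < 0 → ⟪ψ₀, U t ψ₀⟫_ℂ = 0) :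
    ¬ TopologicalSpace.SeparableSpace H := by
  intro hsep
  -- orthogonality of distinct states
  have hpast' : ∀ t : ℝ, t ≠ 0 → ⟪ψ₀, U t ψ₀⟫_ℂ = 0 := by
    intro t ht
    rcases lt_or_gt_of_ne ht with h | h
    · exact hpast t h
    · have hinv : U t (U (-t) ψ₀) = ψ₀ := by
        have : U (t + -t) = U t ∘L U (-t) := hUadd t (-t)
        simp only [add_neg_cancel, hU0] at this
        have := congrArg (fun f : H →L[ℂ] H => f ψ₀) this.symm
        simpa using this
      calc ⟪ψ₀, U t ψ₀⟫_ℂ = ⟪U t (U (-t) ψ₀), U t ψ₀⟫_ℂ := by rw [hinv]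
        _ = ⟪U (-t) ψ₀, ψ₀⟫_ℂ := hUinner t _ _
        _ = starRingEnd ℂ ⟪ψ₀, U (-t) ψ₀⟫_ℂ := (inner_conj_symm _ _).symm
        _ = 0 := by rw [hpast (-t) (by linarith)]; simp
  have horth : ∀ s t : ℝ, s ≠ t → ⟪U s ψ₀, U t ψ₀⟫_ℂ = 0 := by
    intro s t hst
    have h1 : U t = U s ∘L U (t - s) := by rw [← hUadd]; ring_nf
    calc ⟪U s ψ₀, U t ψ₀⟫_ℂ = ⟪U s ψ₀, U s (U (t - s) ψ₀)⟫_ℂ := by rw [h1]; rfl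
      _ = ⟪ψ₀, U (t - s) ψ₀⟫_ℂ := hUinner s _ _
      _ = 0 := hpast' _ (sub_ne_zero.mpr (Ne.symm hst))
  have hnorm : ∀ t : ℝ, ‖U t ψ₀‖ = ‖ψ₀‖ := by
    intro t
    rw [@norm_eq_sqrt_re_inner ℂ, @norm_eq_sqrt_re_inner ℂ, hUinner]
  -- distances between distinct states
  have hdist : ∀ s t : ℝ, s ≠ t → ‖ψ₀‖ ≤ dist (U s ψ₀) (U t ψ₀) := by
    intro s t hst
    have h2 : ‖U s ψ₀ - U t ψ₀‖ ^ 2 = 2 * ‖ψ₀‖ ^ 2 := by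
      rw [@norm_sub_sq ℂ, horth s t hst, hnorm, hnorm]
      simp; ring
    rw [dist_eq_norm]
    nlinarith [norm_nonneg (U s ψ₀ - U t ψ₀), norm_nonneg ψ₀,
      norm_pos_iff.mpr hψ₀]
  -- disjoint open balls indexed by ℝ
  have hcount : Countable ℝ := by
    refine Pairwise.countable_of_isOpen_disjoint
      (ι := ℝ) (s := fun t => Metric.ball (U t ψ₀) (‖ψ₀‖ / 2)) ?_ (fun _ => Metric.isOpen_ball) ?_
    · intro s t hst
      apply Metric.ball_disjoint_ball
      calc ‖ψ₀‖ / 2 + ‖ψ₀‖ / 2 = ‖ψ₀‖ := by ring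
        _ ≤ dist (U s ψ₀) (U t ψ₀) := hdist s t hst
    · intro t
      exact Metric.nonempty_ball.2 (by simpa using norm_pos_iff.mpr hψ₀)
  exact Cardinal.not_countable_real (Set.countable_univ_iff.mpr hcount)
end

section
/- Let H be a complex Hilbert space and U : ℝ → (H →L[ℂ] H) a one-parameter unitary group. Let ψ₀ ∈ H with ‖ψ₀‖ = 1 satisfy ⟪ψ₀, U(t) ψ₀⟫ = 0 for all t < 0, and let V be the topological closure of the ℂ-linear span of { U(t) ψ₀ : t ∈ ℝ }. Then there exists a linear isometric equivalence e : V ≃ ℓ²(ℝ, ℂ) which intertwines the restriction of U with the translation group: for every t ∈ ℝ, every v ∈ V, and every τ ∈ ℝ, e(U(t) v)(τ) = e(v)(τ − t). In particular, e(U(t) ψ₀) is the indicator-type element supported at τ = t. -/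
open scoped InnerProductSpace

/-- (Paper's Theorem 1.) If the unit vector `ψ₀` is orthogonal to all of its
past states under the one-parameter unitary group `U`, then on the closed span `V` of its
history the group `U` is unitarily equivalent to the translation group on `ℓ²(ℝ, ℂ)`;
moreover the equivalence sends `U t ψ₀` to the indicator-type element supported at `τ = t`. -/
theorem history_dynamics_is_translation
    {H : Type*} [NormedAddCommGroup H] [InnerProductSpace ℂ H] [CompleteSpace H]
    (U : ℝ → H →L[ℂ] H)
    (hU0 : U 0 = 1)
    (hUadd : ∀ s t : ℝ, U (s + t) = U s ∘L U t)
    (hUinner : ∀ (t : ℝ) (x y : H), ⟪U t x, U t y⟫_ℂ = ⟪x, y⟫_ℂ)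
    (hUsurj : ∀ t : ℝ, Function.Surjective (U t))
    (ψ₀ : H) (hψ₀ : ‖ψ₀‖ = 1)
    (hpast : ∀ t : ℝ, t < 0 → ⟪ψ₀, U t ψ₀⟫_ℂ = 0)
    (V : Submodule ℂ H)
    (hV : V = (Submodule.span ℂ (Set.range fun t : ℝ => U t ψ₀)).topologicalClosure) :
    ∃ e : V ≃ₗᵢ[ℂ] lp (fun _ : ℝ => ℂ) 2,
      (∀ (t : ℝ) (v : V) (hv : U t (v : H) ∈ V) (τ : ℝ),
        (e ⟨U t (v : H), hv⟩) τ = (e v) (τ - t)) ∧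
      (∀ (t : ℝ) (ht : U t ψ₀ ∈ V) (τ : ℝ),
        (e ⟨U t ψ₀, ht⟩) τ = if τ = t then 1 else 0) := by
  classical
  -- membership of history states
  have hmem : ∀ t : ℝ, U t ψ₀ ∈ V := fun t => by
    rw [hV]
    exact Submodule.le_topologicalClosure _ (Submodule.subset_span ⟨t, rfl⟩)
  set φ : ℝ → V := fun t => ⟨U t ψ₀, hmem t⟩ with hφ
  -- shifting inner products
  have hcomp : ∀ s t : ℝ, U s (U t ψ₀) = U (s + t) ψ₀ := by
    intro s t; rw [hUadd]; rfl
  have hshift : ∀ s t : ℝ, ⟪U s ψ₀, U t ψ₀⟫_ℂ = ⟪ψ₀, U (t - s) ψ₀⟫_ℂ := by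
    intro s t
    have h := hUinner (-s) (U s ψ₀) (U t ψ₀)
    rw [hcomp, hcomp] at h
    have h1 : (-s) + s = 0 := by ring
    have h2 : (-s) + t = t - s := by ring
    rw [h1, h2, hU0] at h
    exact h.symm
  have hzero : ∀ r : ℝ, r ≠ 0 → ⟪ψ₀, U r ψ₀⟫_ℂ = 0 := by
    intro r hr
    rcases lt_or_gt_of_ne hr with h | h
    · exact hpast r h
    · have : ⟪U r ψ₀, ψ₀⟫_ℂ = 0 := by
        have := hshift r 0
        rw [hU0] at this
        simp only [ContinuousLinearMap.one_apply] at this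
        rw [this, zero_sub]
        exact hpast (-r) (by linarith)
      rw [← inner_conj_symm, this, map_zero]
  -- orthonormality
  have horth : Orthonormal ℂ φ := by
    rw [orthonormal_iff_ite]
    intro s t
    have hsub : ⟪φ s, φ t⟫_ℂ = ⟪U s ψ₀, U t ψ₀⟫_ℂ := rfl
    rw [hsub, hshift]
    by_cases h : s = t
    · subst h
      simp only [sub_self, hU0, if_pos rfl, ContinuousLinearMap.one_apply]
      rw [inner_self_eq_norm_sq_to_K, hψ₀]
      norm_num
    · rw [if_neg h, hzero (t - s) (fun hc => h (sub_eq_zero.mp hc).symm)]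
  -- density in V
  have hsp : ⊤ ≤ (Submodule.span ℂ (Set.range φ)).topologicalClosure := by
    intro v _
    have himg : ((↑) '' ((Submodule.span ℂ (Set.range φ)) : Set V) : Set H)
        = ((Submodule.span ℂ (Set.range fun t : ℝ => U t ψ₀)) : Set H) := by
      have : (Submodule.span ℂ (Set.range φ)).map V.subtype
          = Submodule.span ℂ (Set.range fun t : ℝ => U t ψ₀) := by
        rw [Submodule.map_span]
        congr 1
        rw [← Set.range_comp]
        rfl
      calc ((↑) '' ((Submodule.span ℂ (Set.range φ)) : Set V) : Set H)
          = ((Submodule.span ℂ (Set.range φ)).map V.subtype : Set H) := by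
            simp [Submodule.map_coe, Submodule.coe_subtype]
        _ = _ := by rw [this]
    obtain ⟨x, hx⟩ := v
    have hx' := hx
    rw [hV] at hx'
    show (⟨x, hx⟩ : V) ∈ closure ((Submodule.span ℂ (Set.range φ)) : Set V)
    rw [closure_subtype, himg]
    exact hx'
  -- the Hilbert basis
  have hVc : IsClosed (V : Set H) := by
    rw [hV]; exact Submodule.isClosed_topologicalClosure _
  haveI : CompleteSpace V := hVc.completeSpace_coe
  let b : HilbertBasis ℝ ℂ V := HilbertBasis.mk horth hsp
  have hb : ∀ t : ℝ, b t = φ t := fun t => congrFun (HilbertBasis.coe_mk horth hsp) t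
  refine ⟨b.repr, ?_, ?_⟩
  · intro t v hv τ
    rw [b.repr_apply_apply, b.repr_apply_apply, hb, hb]
    show ⟪U τ ψ₀, U t (v : H)⟫_ℂ = ⟪U (τ - t) ψ₀, (v : H)⟫_ℂ
    rw [← hUinner t (U (τ - t) ψ₀) (v : H), hcomp]
    congr 2
    ring
  · intro t ht τ
    have : (⟨U t ψ₀, ht⟩ : V) = φ t := rfl
    rw [this, ← hb, b.repr_apply_apply, hb, hb]
    have := (orthonormal_iff_ite.mp horth) τ t
    exact this
end

section
/- Let H be a complex Hilbert space, A : H →L[ℂ] H a bounded continuous linear operator, and let U(t) = exp((−i t) • A) (the operator exponential). If ψ₀ ∈ H satisfies ⟪ψ₀, U(t) ψ₀⟫ = 0 for all t < 0, then ψ₀ = 0. In other words, a quantum system with a bounded Hamiltonian admits no state perfectly distinguishable from all of its past states. -/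
open scoped InnerProductSpace Topology
open Complex Filter

/-!
The matrix coefficient `z ↦ ⟪ψ₀, exp (z • A) ψ₀⟫` of a bounded operator is an entire function of
`z`. The hypothesis says that it vanishes at `z = -I t` for every `t < 0`, i.e. on the positive
imaginary half-axis, whose points accumulate at `0`. By the identity theorem it vanishes
identically, and at `z = 0` its value is `‖ψ₀‖²`.
-/

theorem differentiable_inner_exp_smul_apply {H : Type*} [NormedAddCommGroup H]
    [InnerProductSpace ℂ H] [CompleteSpace H] (A : H →L[ℂ] H) (φ ψ : H) :
    Differentiable ℂ fun z : ℂ => ⟪φ, NormedSpace.exp (z • A) ψ⟫_ℂ := fun z =>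
  (innerSL ℂ φ).differentiableAt.comp z
    ((hasDerivAt_exp_smul_const A z).differentiableAt.clm_apply (differentiableAt_const ψ))

theorem frequently_ofReal_mul_nhdsNE_zero {w : ℂ} (hw : w ≠ 0) {p : ℂ → Prop}
    (hp : ∀ s : ℝ, 0 < s → p (s * w)) : ∃ᶠ z in 𝓝[≠] (0 : ℂ), p z := by
  have hlim : Tendsto (fun s : ℝ => (s : ℂ) * w) (𝓝[>] 0) (𝓝[≠] 0) := by
    refine tendsto_nhdsWithin_iff.mpr ⟨?_, ?_⟩
    · have hcont : Continuous fun s : ℝ => (s : ℂ) * w := by fun_prop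
      simpa using hcont.continuousWithinAt.tendsto (x := 0) (s := Set.Ioi 0)
    · filter_upwards [self_mem_nhdsWithin] with s (hs : 0 < s)
      exact mul_ne_zero (ofReal_ne_zero.mpr hs.ne') hw
  exact hlim.frequently (eventually_nhdsWithin_of_forall (s := Set.Ioi 0) hp).frequently

theorem Differentiable.eq_zero_of_forall_pos_mul_eq_zero {E : Type*} [NormedAddCommGroup E]
    [NormedSpace ℂ E] [CompleteSpace E] {f : ℂ → E} (hf : Differentiable ℂ f) {w : ℂ}
    (hw : w ≠ 0) (hzero : ∀ s : ℝ, 0 < s → f (s * w) = 0) : f = 0 :=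
  funext fun z =>
    (analyticOnNhd_univ_iff_differentiable.mpr hf).eqOn_zero_of_preconnected_of_frequently_eq_zero
      isPreconnected_univ (Set.mem_univ 0) (frequently_ofReal_mul_nhdsNE_zero hw hzero)
      (Set.mem_univ z)

/-- For a bounded Hamiltonian `A` with evolution `U t = exp ((−i t) • A)`,
no state is perfectly distinguishable from all of its past states: if
`⟪ψ₀, U t ψ₀⟫ = 0` for all `t < 0`, then `ψ₀ = 0`. -/
theorem eq_zero_of_bounded_hamiltonian_vanishing_past
    {H : Type*} [NormedAddCommGroup H] [InnerProductSpace ℂ H] [CompleteSpace H]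
    (A : H →L[ℂ] H) (ψ₀ : H)
    (hpast : ∀ t : ℝ, t < 0 →
      ⟪ψ₀, NormedSpace.exp ((-(I * (t : ℂ))) • A) ψ₀⟫_ℂ = 0) :
    ψ₀ = 0 := by
  have hvanish := (differentiable_inner_exp_smul_apply A ψ₀ ψ₀).eq_zero_of_forall_pos_mul_eq_zero
    I_ne_zero fun s hs => by simpa [mul_comm] using hpast (-s) (by linarith)
  simpa [NormedSpace.exp_zero] using congrFun hvanish 0
end

section
/- Let f : ℂ → ℂ be continuous on the closed lower half-plane {z : Im z ≤ 0} and complex-differentiable on the open lower half-plane {z : Im z < 0}. If f(t) = 0 for every real t > 0 (i.e., f vanishes on the positive real axis), then f(z) = 0 for every z with Im z ≤ 0; in particular f(t) = 0 for every real t. -/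
/-!
With `φ z = conj (f (-conj z))`, the product `f * φ` is continuous on the closed lower half-plane,
holomorphic inside, and real on `ℝ` (it vanishes off `0`, where it equals `|f 0|²`). By Schwarz
reflection it extends to an entire function, which vanishes on the positive reals and hence
everywhere. Holomorphic functions on the connected open half-plane have no zero divisors, so `f` or
`φ` vanishes there, and in both cases so does `f`; continuity carries this to the boundary.

The reflected function is entire by Morera's theorem: a rectangle integral splits along the real
axis into integrals over two rectangles whose interiors avoid it, which vanish by Cauchy–Goursat.
-/

open Complex ComplexConjugate Set Filter Topology intervalIntegral
open scoped Interval

namespace Complex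

section Rectangle

variable {E : Type*} [NormedAddCommGroup E] {f : ℂ → E}

lemma rectangle_subset_rectangle {z w z' w' : ℂ} (hz' : z' ∈ Rectangle z w)
    (hw' : w' ∈ Rectangle z w) : Rectangle z' w' ⊆ Rectangle z w :=
  fun _ hx => ⟨uIcc_subset_uIcc hz'.1 hw'.1 hx.1, uIcc_subset_uIcc hz'.2 hw'.2 hx.2⟩

lemma intervalIntegrable_vertical_of_continuousOn_rectangle {z w : ℂ} {x a b : ℝ}
    (hf : ContinuousOn f (Rectangle z w)) (hx : x ∈ [[z.re, w.re]])
    (ha : a ∈ [[z.im, w.im]]) (hb : b ∈ [[z.im, w.im]]) :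
    IntervalIntegrable (fun y : ℝ => f (x + y * I)) MeasureTheory.volume a b := by
  refine (hf.comp (by fun_prop) fun y hy => ?_).intervalIntegrable
  exact ⟨by simpa using hx, by simpa using uIcc_subset_uIcc ha hb hy⟩

variable [NormedSpace ℂ E]

lemma wedgeIntegral_add_wedgeIntegral_eq_add_adjacent {z w : ℂ} {y : ℝ}
    (hy : y ∈ [[z.im, w.im]]) (hf : ContinuousOn f (Rectangle z w)) :
    wedgeIntegral z w f + wedgeIntegral w z f =
      (wedgeIntegral z (w.re + y * I) f + wedgeIntegral (w.re + y * I) z f) +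
      (wedgeIntegral (z.re + y * I) w f + wedgeIntegral w (z.re + y * I) f) := by
  have hz : z.im ∈ [[z.im, w.im]] := left_mem_uIcc
  have hw : w.im ∈ [[z.im, w.im]] := right_mem_uIcc
  simp only [wedgeIntegral_add_wedgeIntegral_eq, add_re, ofReal_re, mul_re, I_re, I_im,
    ofReal_im, add_im, mul_im, mul_zero, mul_one, sub_self, add_zero, zero_add]
  rw [← integral_add_adjacent_intervals
      (intervalIntegrable_vertical_of_continuousOn_rectangle hf right_mem_uIcc hz hy)
      (intervalIntegrable_vertical_of_continuousOn_rectangle hf right_mem_uIcc hy hw),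
    ← integral_add_adjacent_intervals
      (intervalIntegrable_vertical_of_continuousOn_rectangle hf left_mem_uIcc hz hy)
      (intervalIntegrable_vertical_of_continuousOn_rectangle hf left_mem_uIcc hy hw)]
  simp only [smul_add]
  abel

lemma wedgeIntegral_add_wedgeIntegral_eq_zero_of_im_ne_zero {z w : ℂ}
    (hf : ContinuousOn f (Rectangle z w))
    (hd : ∀ x ∈ Rectangle z w, x.im ≠ 0 → DifferentiableAt ℂ f x)
    (h0 : (0 : ℝ) ∉ Ioo (min z.im w.im) (max z.im w.im)) :
    wedgeIntegral z w f + wedgeIntegral w z f = 0 := by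
  rw [wedgeIntegral_add_wedgeIntegral_eq]
  refine integral_boundary_rect_eq_zero_of_continuousOn_of_differentiableOn f z w hf
    fun x hx => (hd x ?_ fun hx0 => h0 (hx0 ▸ hx.2)).differentiableWithinAt
  exact ⟨Ioo_subset_Icc_self hx.1, Ioo_subset_Icc_self hx.2⟩

end Rectangle

section Morera

variable {E : Type*} [NormedAddCommGroup E] [NormedSpace ℂ E] {f : ℂ → E} {U : Set ℂ}

theorem isConservativeOn_of_differentiableAt_of_im_ne_zero (hc : ContinuousOn f U)
    (hd : ∀ z ∈ U, z.im ≠ 0 → DifferentiableAt ℂ f z) : IsConservativeOn f U := by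
  intro z w hzw
  rw [← add_eq_zero_iff_eq_neg]
  have hd' : ∀ x ∈ Rectangle z w, x.im ≠ 0 → DifferentiableAt ℂ f x :=
    fun x hx => hd x (hzw hx)
  by_cases h0 : (0 : ℝ) ∈ Ioo (min z.im w.im) (max z.im w.im)
  · have hy : (0 : ℝ) ∈ [[z.im, w.im]] := Ioo_subset_Icc_self h0
    have hsplit := wedgeIntegral_add_wedgeIntegral_eq_add_adjacent hy (hc.mono hzw)
    simp only [ofReal_zero, zero_mul, add_zero] at hsplit
    have hlow : Rectangle z w.re ⊆ Rectangle z w :=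
      rectangle_subset_rectangle ⟨left_mem_uIcc, left_mem_uIcc⟩
        ⟨by simp, by simpa using hy⟩
    have hup : Rectangle z.re w ⊆ Rectangle z w :=
      rectangle_subset_rectangle ⟨by simp, by simpa using hy⟩
        ⟨right_mem_uIcc, right_mem_uIcc⟩
    rw [hsplit,
      wedgeIntegral_add_wedgeIntegral_eq_zero_of_im_ne_zero (hc.mono (hlow.trans hzw))
        (fun x hx => hd' x (hlow hx)) (by simp +contextual [le_of_lt]),
      wedgeIntegral_add_wedgeIntegral_eq_zero_of_im_ne_zero (hc.mono (hup.trans hzw))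
        (fun x hx => hd' x (hup hx)) (by simp +contextual [le_of_lt]), add_zero]
  · exact wedgeIntegral_add_wedgeIntegral_eq_zero_of_im_ne_zero (hc.mono hzw) hd' h0

theorem differentiableOn_of_continuousOn_of_differentiableAt_of_im_ne_zero [CompleteSpace E]
    (hU : IsOpen U) (hc : ContinuousOn f U)
    (hd : ∀ z ∈ U, z.im ≠ 0 → DifferentiableAt ℂ f z) : DifferentiableOn ℂ f U :=
  (isConservativeOn_and_continuousOn_iff_isDifferentiableOn hU).1
    ⟨isConservativeOn_of_differentiableAt_of_im_ne_zero hc hd, hc⟩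

end Morera

theorem _root_.Differentiable.eq_zero_of_forall_ofReal_pos {E : Type*} [NormedAddCommGroup E]
    [NormedSpace ℂ E] [CompleteSpace E] {F : ℂ → E}
    (hF : Differentiable ℂ F) (hpos : ∀ t : ℝ, 0 < t → F t = 0) : F = 0 := by
  have hreal : Tendsto ((↑) : ℝ → ℂ) (𝓝[>] (0 : ℝ)) (𝓝[≠] 0) :=
    tendsto_nhdsWithin_iff.2
      ⟨(continuous_ofReal.tendsto' 0 0 ofReal_zero).mono_left nhdsWithin_le_nhds,
        eventually_mem_nhdsWithin.mono fun t ht => by simpa using ht.ne'⟩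
  have hfreq : ∃ᶠ w in 𝓝[≠] (0 : ℂ), F w = 0 :=
    hreal.frequently
      (eventually_nhdsWithin_of_forall hpos : ∀ᶠ t : ℝ in 𝓝[>] 0, F t = 0).frequently
  funext z
  exact AnalyticOnNhd.eqOn_zero_of_preconnected_of_frequently_eq_zero
    (fun w _ => hF.analyticAt w) isPreconnected_univ (mem_univ 0) hfreq (mem_univ z)

section Reflection

noncomputable def schwarzReflection (g : ℂ → ℂ) (z : ℂ) : ℂ :=
  if z.im ≤ 0 then g z else conj (g (conj z))

variable {g : ℂ → ℂ}

lemma schwarzReflection_of_im_nonpos {z : ℂ} (hz : z.im ≤ 0) : schwarzReflection g z = g z :=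
  if_pos hz

theorem continuous_schwarzReflection (hc : ContinuousOn g {z | z.im ≤ 0})
    (hreal : ∀ x : ℝ, conj (g x) = g x) : Continuous (schwarzReflection g) := by
  refine continuous_if_le continuous_im continuous_const hc ?_ fun z hz => ?_
  · exact continuous_conj.comp_continuousOn
      (hc.comp continuous_conj.continuousOn fun z hz => by simpa using hz)
  · obtain hre : (z.re : ℂ) = z := conj_eq_iff_re.1 (conj_eq_iff_im.2 hz)
    rw [← hre, conj_ofReal, hreal]

theorem differentiable_schwarzReflection (hc : ContinuousOn g {z | z.im ≤ 0})
    (hd : DifferentiableOn ℂ g {z | z.im < 0}) (hreal : ∀ x : ℝ, conj (g x) = g x) :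
    Differentiable ℂ (schwarzReflection g) := by
  have hlower : IsOpen {z : ℂ | z.im < 0} := isOpen_lt continuous_im continuous_const
  rw [← differentiableOn_univ]
  refine differentiableOn_of_continuousOn_of_differentiableAt_of_im_ne_zero isOpen_univ
    (continuous_schwarzReflection hc hreal).continuousOn fun z _ hz => ?_
  rcases hz.lt_or_gt with hz | hz
  · refine (hd.differentiableAt (hlower.mem_nhds hz)).congr_of_eventuallyEq ?_
    filter_upwards [continuous_im.continuousAt.eventually_lt continuousAt_const hz] with w hw
    exact schwarzReflection_of_im_nonpos hw.le
  · have hconj : DifferentiableAt ℂ (conj ∘ g ∘ conj) z :=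
      differentiableAt_conj_conj_iff.2 <| hd.differentiableAt <| hlower.mem_nhds <| by
        simpa using hz
    refine hconj.congr_of_eventuallyEq ?_
    filter_upwards [continuousAt_const.eventually_lt continuous_im.continuousAt hz] with w hw
    exact if_neg hw.not_ge

lemma differentiableOn_conj_comp_neg_conj {s : Set ℂ} (hs : IsOpen s)
    (hg : DifferentiableOn ℂ g s) :
    DifferentiableOn ℂ (fun z => conj (g (-conj z))) {z | -conj z ∈ s} := fun z hz =>
  have hneg : DifferentiableAt ℂ (fun w => g (-w)) (conj z) :=
    (hg.differentiableAt (hs.mem_nhds (by simpa using hz))).comp _ differentiableAt_id.neg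
  (differentiableAt_conj_conj_iff.2 hneg).differentiableWithinAt

end Reflection

end Complex

/-- (Complex-analytic core of Unruh–Wald's argument, used in the paper's
Theorem 2.) If `f : ℂ → ℂ` is continuous on the closed lower half-plane, holomorphic on the
open lower half-plane, and vanishes on the positive real axis, then `f` vanishes on the whole
closed lower half-plane; in particular it vanishes at every real number. -/
theorem lower_halfplane_holomorphic_vanishing_on_positive_reals
    (f : ℂ → ℂ)
    (hc : ContinuousOn f {z : ℂ | z.im ≤ 0})
    (hd : DifferentiableOn ℂ f {z : ℂ | z.im < 0})
    (hv : ∀ t : ℝ, 0 < t → f (t : ℂ) = 0) :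
    (∀ z : ℂ, z.im ≤ 0 → f z = 0) ∧ (∀ t : ℝ, f (t : ℂ) = 0) := by
  have hS : IsOpen {z : ℂ | z.im < 0} := isOpen_lt continuous_im continuous_const
  set φ : ℂ → ℂ := fun z => conj (f (-conj z))
  have hφc : ContinuousOn φ {z | z.im ≤ 0} :=
    continuous_conj.comp_continuousOn (hc.comp (by fun_prop) fun z hz => by simpa using hz)
  have hφd : DifferentiableOn ℂ φ {z | z.im < 0} := by
    simpa using differentiableOn_conj_comp_neg_conj hS hd
  have hreal : ∀ x : ℝ, conj ((f * φ) x) = (f * φ) x := by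
    intro x
    rcases lt_trichotomy x 0 with hx | rfl | hx
    · have hφx : φ x = 0 := by simpa [φ] using hv (-x) (neg_pos.2 hx)
      simp [hφx]
    · simp [φ, mul_comm]
    · simp [φ, hv x hx]
  have hentire := differentiable_schwarzReflection (hc.mul hφc) (hd.mul hφd) hreal
  have hzero : schwarzReflection (f * φ) = 0 :=
    hentire.eq_zero_of_forall_ofReal_pos fun t ht => by
      simp [schwarzReflection_of_im_nonpos, hv t ht]
  have hprod : ∀ z ∈ {z : ℂ | z.im < 0}, f z * φ z = 0 := fun z (hz : z.im < 0) => by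
    simpa [schwarzReflection_of_im_nonpos hz.le] using congrFun hzero z
  have hfS : ∀ z ∈ {z : ℂ | z.im < 0}, f z = 0 := by
    rcases (hd.analyticOnNhd hS).eq_zero_or_eq_zero_of_mul_eq_zero (hφd.analyticOnNhd hS) hprod
      (convex_halfSpace_im_lt 0).isPreconnected with h | h
    · exact h
    · intro z hz
      simpa [φ] using h (-conj z) (by simpa using hz)
  have hf : ∀ z : ℂ, z.im ≤ 0 → f z = 0 := fun z hz =>
    EqOn.of_subset_closure hfS hc continuousOn_const (fun z (hz : z.im < 0) => hz.le) (by simp) hz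
  exact ⟨hf, fun t => hf t (by simp)⟩
end

section
/- Let H be a complex Hilbert space, A : H →L[ℂ] H a bounded self-adjoint operator (IsSelfAdjoint A), and s₁, s₂ ∈ H. Write U(t) = exp((−i t) • A). If ⟪s₁, U(t) s₂⟫ = 0 for all real t > 0 (the system starting in s₂ never returns to s₁ at any positive time), then ⟪s₁, U(t) s₂⟫ = 0 and ⟪s₂, U(t) s₁⟫ = 0 for every real t. In particular, there exist no times t₁ < t₂ with ⟪s₂, U(t₂ − t₁) s₁⟫ ≠ 0: the system can never make the transition from s₁ to s₂ at all. -/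
/-!
The amplitude `t ↦ ⟪s₁, U t s₂⟫` is real-analytic on all of `ℝ`, because
`U t = exp (t • (-I • A))` is an entire power series in `t`; as it vanishes for `t > 0`, the
identity theorem makes it vanish everywhere. Self-adjointness of `A` gives `(U t)† = U (-t)`,
so `⟪s₂, U t s₁⟫` is the conjugate of `⟪s₁, U (-t) s₂⟫` and vanishes as well.
-/

open scoped InnerProductSpace
open Complex

theorem analyticOnNhd_exp_smul {𝕂 𝔸 : Type*} [RCLike 𝕂] [NormedRing 𝔸] [NormedAlgebra 𝕂 𝔸]
    [CompleteSpace 𝔸] (a : 𝔸) :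
    AnalyticOnNhd 𝕂 (fun t : 𝕂 => NormedSpace.exp (t • a)) Set.univ := fun t _ =>
  (NormedSpace.exp_analytic (t • a)).comp (f := fun t : 𝕂 => t • a)
    (((ContinuousLinearMap.id 𝕂 𝕂).smulRight a).analyticAt t)

theorem eq_zero_of_forall_pos_eq_zero {E : Type*} [NormedAddCommGroup E] [NormedSpace ℝ E]
    {f : ℝ → E} (hf : AnalyticOnNhd ℝ f Set.univ) (hpos : ∀ t, 0 < t → f t = 0) (t : ℝ) :
    f t = 0 :=
  hf.eqOn_zero_of_preconnected_of_eventuallyEq_zero isPreconnected_univ (Set.mem_univ 1)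
    (Filter.eventually_of_mem (Ioi_mem_nhds one_pos) hpos) (Set.mem_univ t)

theorem neg_I_mul_ofReal_smul {M : Type*} [AddCommGroup M] [Module ℂ M] (t : ℝ) (a : M) :
    (-(I * (t : ℂ))) • a = t • ((-I) • a) := by
  rw [← smul_assoc, real_smul]
  ring_nf

theorem analyticOnNhd_inner_exp_neg_I_mul_smul {H : Type*} [NormedAddCommGroup H]
    [InnerProductSpace ℂ H] [CompleteSpace H] (A : H →L[ℂ] H) (x y : H) :
    AnalyticOnNhd ℝ (fun t : ℝ => ⟪x, NormedSpace.exp ((-(I * (t : ℂ))) • A) y⟫_ℂ)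
      Set.univ := by
  simp_rw [neg_I_mul_ofReal_smul]
  exact fun t _ =>
    (((innerSL ℂ x).comp (ContinuousLinearMap.apply ℂ H y)).restrictScalars ℝ).analyticAt _
      |>.comp (analyticOnNhd_exp_smul ((-I) • A) t trivial)

theorem IsSelfAdjoint.star_exp_neg_I_mul_smul {𝔸 : Type*} [Ring 𝔸] [Algebra ℂ 𝔸]
    [TopologicalSpace 𝔸] [IsTopologicalRing 𝔸] [T2Space 𝔸] [StarRing 𝔸] [StarModule ℂ 𝔸]
    [ContinuousStar 𝔸] {a : 𝔸} (ha : IsSelfAdjoint a) (t : ℝ) :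
    star (NormedSpace.exp ((-(I * (t : ℂ))) • a)) =
      NormedSpace.exp ((-(I * ((-t : ℝ) : ℂ))) • a) := by
  rw [NormedSpace.star_exp, star_smul, ha.star_eq]
  simp

theorem IsSelfAdjoint.inner_exp_neg_I_mul_smul_comm {H : Type*} [NormedAddCommGroup H]
    [InnerProductSpace ℂ H] [CompleteSpace H] {A : H →L[ℂ] H} (hA : IsSelfAdjoint A) (t : ℝ)
    (x y : H) :
    ⟪y, NormedSpace.exp ((-(I * (t : ℂ))) • A) x⟫_ℂ =
      starRingEnd ℂ ⟪x, NormedSpace.exp ((-(I * ((-t : ℝ) : ℂ))) • A) y⟫_ℂ := by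
  rw [← hA.star_exp_neg_I_mul_smul t, ContinuousLinearMap.star_eq_adjoint,
    ContinuousLinearMap.adjoint_inner_right, inner_conj_symm]

/-- (Paper's Theorem 2, after Unruh and Wald, for a bounded Hamiltonian.)
Let `A` be a bounded self-adjoint operator with evolution `U t = exp ((−i t) • A)`. If the
amplitude `⟪s₁, U t s₂⟫` vanishes for all `t > 0` (the system starting in `s₂` never returns
to `s₁`), then `⟪s₁, U t s₂⟫ = 0` and `⟪s₂, U t s₁⟫ = 0` for every real `t`; in particular
there are no times `t₁ < t₂` with `⟪s₂, U (t₂ − t₁) s₁⟫ ≠ 0`, i.e. the system can never make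
the transition from `s₁` to `s₂` at all. -/
theorem no_irreversible_transition_of_bounded_selfAdjoint_hamiltonian
    {H : Type*} [NormedAddCommGroup H] [InnerProductSpace ℂ H] [CompleteSpace H]
    (A : H →L[ℂ] H) (hA : IsSelfAdjoint A) (s₁ s₂ : H)
    (hnoreturn : ∀ t : ℝ, 0 < t →
      ⟪s₁, NormedSpace.exp ((-(I * (t : ℂ))) • A) s₂⟫_ℂ = 0) :
    (∀ t : ℝ, ⟪s₁, NormedSpace.exp ((-(I * (t : ℂ))) • A) s₂⟫_ℂ = 0 ∧
      ⟪s₂, NormedSpace.exp ((-(I * (t : ℂ))) • A) s₁⟫_ℂ = 0) ∧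
    ¬ ∃ t₁ t₂ : ℝ, t₁ < t₂ ∧
      ⟪s₂, NormedSpace.exp ((-(I * ((t₂ - t₁) : ℂ))) • A) s₁⟫_ℂ ≠ 0 := by
  have forward (t : ℝ) : ⟪s₁, NormedSpace.exp ((-(I * (t : ℂ))) • A) s₂⟫_ℂ = 0 :=
    eq_zero_of_forall_pos_eq_zero (analyticOnNhd_inner_exp_neg_I_mul_smul A s₁ s₂) hnoreturn t
  have backward (t : ℝ) : ⟪s₂, NormedSpace.exp ((-(I * (t : ℂ))) • A) s₁⟫_ℂ = 0 := by
    rw [hA.inner_exp_neg_I_mul_smul_comm, forward, map_zero]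
  refine ⟨fun t => ⟨forward t, backward t⟩, ?_⟩
  rintro ⟨t₁, t₂, -, hne⟩
  exact hne (by exact_mod_cast backward (t₂ - t₁))
end
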